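/- Define f₁^#(x) := π ∑_{n=0}^∞ (−1)^n (n + 1/2) exp(−(n + 1/2)²π²x/2) for x > 0, and L_{χ₄}(s) := ∑_{n=0}^∞ (−1)^n (2n+1)^{−s} (the Dirichlet L-function of the nontrivial character mod 4). Then for every complex s with Re(s) > 0: ∫₀^∞ x^s f₁^#(x) dx = Γ(s+1) · 2^{s+1} · (2/π)^{2s+1} · L_{χ₄}(2s+1). -/
import Mathlib


open MeasureTheory

/-- `f₁^#(x) = π ∑_{n≥0} (−1)^n (n+1/2) e^{−(n+1/2)²π²x/2}`. -/
noncomputable def fOneSharp (x : ℝ) : ℝ :=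
  Real.pi * ∑' n : ℕ, (-1 : ℝ) ^ n * ((n : ℝ) + 1 / 2) *
    Real.exp (-((n : ℝ) + 1 / 2) ^ 2 * Real.pi ^ 2 * x / 2)

lemma ofReal_eq_cexp (b : ℝ) (hb : 0 < b) :
    ((b : ℝ) : ℂ) = Complex.exp ((Real.log b : ℝ) : ℂ) := by
  rw [← Complex.ofReal_exp, Real.exp_log hb]

lemma cpow_posreal (b : ℝ) (hb : 0 < b) (w : ℂ) :
    ((b : ℝ) : ℂ) ^ w = Complex.exp (((Real.log b : ℝ) : ℂ) * w) := by
  rw [Complex.cpow_def_of_ne_zero (by exact_mod_cast hb.ne'), Complex.ofReal_log hb.le]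

open Real in
lemma summable_fOneSharp (t : ℝ) (ht : 0 < t) :
    Summable (fun n : ℕ ↦ (-1 : ℝ) ^ n * ((n : ℝ) + 1 / 2) *
      Real.exp (-((n : ℝ) + 1 / 2) ^ 2 * Real.pi ^ 2 * t / 2)) := by
  have hπ := Real.pi_pos
  have hr0 : (0:ℝ) < Real.pi ^ 2 * t / 2 := by positivity
  have hr : Real.exp (-(Real.pi ^ 2 * t / 2)) < 1 :=
    Real.exp_lt_one_iff.mpr (by linarith)
  have hrn : ‖Real.exp (-(Real.pi ^ 2 * t / 2))‖ < 1 := by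
    rwa [Real.norm_eq_abs, abs_of_pos (Real.exp_pos _)]
  have h1 : Summable (fun n : ℕ ↦ ((n : ℝ) + 1) * Real.exp (-(Real.pi ^ 2 * t / 2)) ^ n) := by
    have ha := summable_pow_mul_geometric_of_norm_lt_one 1 hrn (R := ℝ)
    have h2 := summable_geometric_of_lt_one (Real.exp_pos _).le hr
    simpa [add_mul] using ha.add h2
  refine Summable.of_norm (h1.of_nonneg_of_le (fun n ↦ norm_nonneg _) (fun n ↦ ?_))
  have hn : (0:ℝ) ≤ (n:ℝ) + 1/2 := by positivity
  rw [norm_mul, norm_mul, Real.norm_eq_abs, Real.norm_eq_abs, Real.norm_eq_abs,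
    abs_of_nonneg hn, abs_of_pos (Real.exp_pos _), abs_pow, abs_neg, abs_one, one_pow, one_mul,
    ← Real.exp_nat_mul]
  have key : -((n : ℝ) + 1 / 2) ^ 2 * Real.pi ^ 2 * t / 2 ≤ (n:ℝ) * -(Real.pi ^ 2 * t / 2) := by
    have h3 : (n:ℝ) ≤ ((n:ℝ) + 1/2)^2 := by nlinarith [sq_nonneg ((n:ℝ) - 1/2)]
    nlinarith
  exact mul_le_mul (by linarith) (Real.exp_le_exp.mpr key) (Real.exp_pos _).le (by linarith)

open Real in
lemma summable_aux2 (σ : ℝ) (hσ : 0 < σ) :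
    Summable fun n : ℕ ↦ (Real.pi * ((n:ℝ) + 1/2)) /
      (((n : ℝ) + 1 / 2) ^ 2 * Real.pi ^ 2 / 2) ^ (σ + 1) := by
  have hπ := Real.pi_pos
  have he : -(2*σ+1) < -1 := by linarith
  have hbase : Summable fun n : ℕ ↦ ((n:ℝ)+1) ^ (-(2*σ+1)) := by
    have := (summable_nat_add_iff 1).mpr (Real.summable_nat_rpow.mpr he)
    refine this.congr (fun n ↦ ?_)
    push_cast
    ring_nf
  have hmaj : Summable fun n : ℕ ↦
      (Real.pi / (Real.pi^2/2)^(σ+1) * 2^(2*σ+1)) * ((n:ℝ)+1) ^ (-(2*σ+1)) :=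
    hbase.mul_left _
  refine hmaj.of_nonneg_of_le (fun n ↦ by positivity) (fun n ↦ ?_)
  set x : ℝ := (n:ℝ) + 1/2 with hxdef
  have hx : (0:ℝ) < x := by positivity
  have hc : (0:ℝ) < (Real.pi^2/2)^(σ+1) := by positivity
  have e1 : (x ^ 2 * Real.pi ^ 2 / 2) ^ (σ + 1) = x ^ (2*(σ+1)) * (Real.pi^2/2)^(σ+1) := by
    rw [show x ^ 2 * Real.pi ^ 2 / 2 = x^2 * (Real.pi^2/2) from by ring,
      Real.mul_rpow (by positivity) (by positivity), ← Real.rpow_natCast x 2,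
      ← Real.rpow_mul hx.le]
    norm_num
  have e2 : x ^ (-(2*σ+1)) = x / x ^ (2*(σ+1)) := by
    rw [eq_div_iff (ne_of_gt (Real.rpow_pos_of_pos hx _)), ← Real.rpow_add hx,
      show -(2*σ+1) + 2*(σ+1) = 1 from by ring, Real.rpow_one]
  have e3 : Real.pi * x / (x ^ 2 * Real.pi ^ 2 / 2) ^ (σ + 1)
      = (Real.pi / (Real.pi^2/2)^(σ+1)) * x ^ (-(2*σ+1)) := by
    rw [e1, e2]; ring
  rw [e3]
  have hle : x ^ (-(2*σ+1)) ≤ 2^(2*σ+1) * ((n:ℝ)+1) ^ (-(2*σ+1)) := by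
    have h1 : ((n:ℝ)+1)/2 ≤ x := by rw [hxdef]; linarith
    have h2 : x ^ (-(2*σ+1)) ≤ (((n:ℝ)+1)/2) ^ (-(2*σ+1)) :=
      Real.rpow_le_rpow_of_nonpos (by positivity) h1 (by linarith)
    calc x ^ (-(2*σ+1)) ≤ (((n:ℝ)+1)/2) ^ (-(2*σ+1)) := h2
    _ = 2^(2*σ+1) * ((n:ℝ)+1) ^ (-(2*σ+1)) := by
        rw [Real.div_rpow (by positivity) (by norm_num), div_eq_mul_inv,
          ← Real.rpow_neg (by norm_num : (0:ℝ) ≤ 2), neg_neg, mul_comm]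
  calc Real.pi / (Real.pi^2/2)^(σ+1) * x ^ (-(2*σ+1))
      ≤ Real.pi / (Real.pi^2/2)^(σ+1) * (2^(2*σ+1) * ((n:ℝ)+1) ^ (-(2*σ+1))) := by
        apply mul_le_mul_of_nonneg_left hle (by positivity)
    _ = Real.pi / (Real.pi^2/2)^(σ+1) * 2^(2*σ+1) * ((n:ℝ)+1) ^ (-(2*σ+1)) := by ring

lemma term_eq (s : ℂ) (n : ℕ) :
    Complex.Gamma (s+1) * ((Real.pi : ℂ) * (-1)^n * ((n:ℂ) + 1/2)) /
        (((((n:ℝ) + 1/2)^2 * Real.pi^2/2 : ℝ)) : ℂ)^(s+1)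
      = Complex.Gamma (s+1) * (2:ℂ)^(s+1) * ((2/Real.pi : ℝ) : ℂ)^(2*s+1) *
        ((-1 : ℂ)^n * (2*(n:ℂ) + 1)^(-(2*s+1))) := by
  have hπ := Real.pi_pos
  set x : ℝ := (n:ℝ) + 1/2 with hxdef
  have hx : (0:ℝ) < x := by positivity
  have hb : (0:ℝ) < x^2*Real.pi^2/2 := by positivity
  have hc : (0:ℝ) < 2/Real.pi := by positivity
  have h2x : (0:ℝ) < 2*x := by positivity
  rw [show ((n:ℂ) + 1/2) = ((x:ℝ):ℂ) from by rw [hxdef]; push_cast; ring,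
    show (2*(n:ℂ) + 1) = ((2*x:ℝ):ℂ) from by rw [hxdef]; push_cast; ring,
    show (2:ℂ)^(s+1) = Complex.exp ((Real.log 2 : ℂ) * (s+1)) from by
      rw [show (2:ℂ) = ((2:ℝ):ℂ) from by norm_num, cpow_posreal _ (by norm_num : (0:ℝ) < 2)],
    cpow_posreal _ hb, cpow_posreal _ hc,
    cpow_posreal _ h2x, ofReal_eq_cexp _ hπ, ofReal_eq_cexp _ hx]
  have hexp : Complex.exp ((Real.log Real.pi : ℂ)) * Complex.exp ((Real.log x : ℂ)) *
        (Complex.exp ((Real.log (x^2*Real.pi^2/2) : ℂ) * (s+1)))⁻¹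
      = Complex.exp ((Real.log 2 : ℂ) * (s+1)) *
        Complex.exp ((Real.log (2/Real.pi) : ℂ) * (2*s+1)) *
        Complex.exp ((Real.log (2*x) : ℂ) * (-(2*s+1))) := by
    rw [← Complex.exp_neg, ← Complex.exp_add, ← Complex.exp_add, ← Complex.exp_add,
      ← Complex.exp_add]
    congr 1
    have l1 : Real.log (x^2*Real.pi^2/2) = 2*Real.log x + 2*Real.log Real.pi - Real.log 2 := by
      rw [Real.log_div (by positivity) (by norm_num), Real.log_mul (by positivity) (by positivity),
        Real.log_pow, Real.log_pow]
      push_cast; ring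
    have l2 : Real.log (2/Real.pi) = Real.log 2 - Real.log Real.pi :=
      Real.log_div (by norm_num) hπ.ne'
    have l3 : Real.log (2*x) = Real.log 2 + Real.log x :=
      Real.log_mul (by norm_num) hx.ne'
    rw [l1, l2, l3]
    push_cast
    ring
  rw [div_eq_mul_inv]
  linear_combination (Complex.Gamma (s+1) * (-1:ℂ)^n) * hexp

/-- Mellin transform of `f₁^#`: for `Re(s) > 0`,
`∫₀^∞ x^s f₁^#(x) dx = Γ(s+1) 2^{s+1} (2/π)^{2s+1} L_{χ₄}(2s+1)`,
where `L_{χ₄}(s) = ∑_{n≥0} (−1)^n (2n+1)^{−s}`. -/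
theorem mellin_fOneSharp (s : ℂ) (hs : 0 < s.re) :
    ∫ x in Set.Ioi (0 : ℝ), (x : ℂ) ^ s * (fOneSharp x : ℂ)
      = Complex.Gamma (s + 1) * (2 : ℂ) ^ (s + 1) *
          ((2 / Real.pi : ℝ) : ℂ) ^ (2 * s + 1) *
          ∑' n : ℕ, (-1 : ℂ) ^ n * (2 * (n : ℂ) + 1) ^ (-(2 * s + 1)) := by
  have hπ := Real.pi_pos
  set a : ℕ → ℂ := fun n ↦ (Real.pi : ℂ) * (-1) ^ n * ((n : ℂ) + 1 / 2) with ha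
  set p : ℕ → ℝ := fun n ↦ ((n : ℝ) + 1 / 2) ^ 2 * Real.pi ^ 2 / 2 with hp
  have hppos : ∀ n, 0 < p n := fun n ↦ by positivity
  have hs1 : 0 < (s + 1).re := by
    rw [Complex.add_re, Complex.one_re]; linarith
  have hF : ∀ t ∈ Set.Ioi (0:ℝ), HasSum (fun n ↦ a n * Real.exp (-p n * t))
      ((fOneSharp t : ℝ) : ℂ) := by
    intro t ht
    have hsum := summable_fOneSharp t ht
    have h1 := Complex.hasSum_ofReal.mpr ((hsum.hasSum).mul_left Real.pi)
    rw [show Real.pi * (∑' n : ℕ, (-1 : ℝ) ^ n * ((n : ℝ) + 1 / 2) *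
        Real.exp (-((n : ℝ) + 1 / 2) ^ 2 * Real.pi ^ 2 * t / 2)) = fOneSharp t from rfl] at h1
    have heq : (fun n : ℕ ↦ a n * (Real.exp (-p n * t) : ℂ))
        = fun n : ℕ ↦ ((Real.pi * ((-1 : ℝ) ^ n * ((n : ℝ) + 1 / 2) *
            Real.exp (-((n : ℝ) + 1 / 2) ^ 2 * Real.pi ^ 2 * t / 2)) : ℝ) : ℂ) := by
      funext n
      rw [show -p n * t = -((n : ℝ) + 1 / 2) ^ 2 * Real.pi ^ 2 * t / 2 from by rw [hp]; ring]
      push_cast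
      ring
    rw [heq]
    exact h1
  have h_sum : Summable fun n : ℕ ↦ ‖a n‖ / p n ^ (s + 1).re := by
    refine (summable_aux2 s.re hs).congr (fun n ↦ ?_)
    have hna : a n = ((Real.pi * ((n:ℝ) + 1/2) : ℝ) : ℂ) * (-1)^n := by
      rw [ha]; push_cast; ring
    rw [hna, norm_mul, norm_pow, norm_neg, norm_one, one_pow, mul_one, Complex.norm_real,
      Real.norm_eq_abs, abs_of_pos (by positivity), show (s+1).re = s.re + 1 from by
        rw [Complex.add_re, Complex.one_re], hp]
  have key := hasSum_mellin (fun n ↦ Or.inr (hppos n)) hs1 hF h_sum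
  have hmel : mellin (fun t : ℝ ↦ ((fOneSharp t : ℝ) : ℂ)) (s + 1)
      = ∫ x in Set.Ioi (0 : ℝ), (x : ℂ) ^ s * (fOneSharp x : ℂ) := by
    simp [mellin, add_sub_cancel_right, smul_eq_mul]
  rw [← hmel, ← key.tsum_eq]
  rw [show Complex.Gamma (s + 1) * (2 : ℂ) ^ (s + 1) * ((2 / Real.pi : ℝ) : ℂ) ^ (2 * s + 1) *
      ∑' n : ℕ, (-1 : ℂ) ^ n * (2 * (n : ℂ) + 1) ^ (-(2 * s + 1))
      = ∑' n : ℕ, Complex.Gamma (s + 1) * (2 : ℂ) ^ (s + 1) *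
        ((2 / Real.pi : ℝ) : ℂ) ^ (2 * s + 1) * ((-1 : ℂ) ^ n * (2 * (n : ℂ) + 1) ^ (-(2 * s + 1)))
      from (tsum_mul_left).symm]
  exact tsum_congr (fun n ↦ term_eq s n)
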